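/- If p < m, an element w is regular in G(m, p, n) if and only if there is an integer r ≥ 1 such that, setting g := gcd(r, n), w has exactly g cycles, each of length n/g and of weight r/g (mod m). An element w is regular in G(m, m, n) if and only if there is an integer r ≥ 1 such that either (1) setting g := gcd(r, n), w has exactly g cycles, each of length n/g and weight r/g (mod m), or (2) setting g' := gcd(r, n−1), w has exactly g' + 1 cycles, of which g' have length (n−1)/g' and weight r/g' (mod m) and the remaining one is a 1-cycle of weight −r (mod m). -/

import Mathlib

/-!
The matrix of `w = [u; a]` acts by `(w v)ᵢ = ζ^(aᵢ) v(u⁻¹ i)` with `ζ = e^(2πi/m)`. The reflections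
of `G(m,p,n)` are the weighted transpositions, which fix `v` iff `vᵢ = ζᵃ vⱼ`, and, only when
`p < m`, the diagonal elements of nonzero weight, which fix `v` iff some `vᵢ = 0`. So `v` is regular
iff the `vᵢ^m` are pairwise distinct and, for `p < m`, nonzero.

If `w v = c v`, going once around a cycle `C` on which `v` does not vanish gives `c^|C| = ζ^(wt C)`,
and the `vᵢ^m` along `C` are pairwise distinct exactly when `c^m` has order `|C|`. Conversely such a
`c` yields an eigenvector on each cycle, and scaling them apart keeps the `m`-th powers distinct.
Hence a regular eigenvector exists iff, for some `c`, all cycles (except one fixed point, possible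
only for `p = m`, whose weight is then forced by `a₁ + ⋯ + aₙ = 0`) have length `d = ord(c^m)` and
weight `s` with `c^d = ζ^s`. Writing `c = e^(2πi s/(md))` with `gcd(s, d) = 1`, these are the cycle
types of the statement, with `r = g(s + md)` for `g` the number of such cycles.
-/

open Equiv Finset
@[ext]
structure GW (m n : ℕ) where
  perm : Equiv.Perm (Fin n)
  wt : Fin n → ZMod m
namespace GW
variable {m n : ℕ}
instance : Mul (GW m n) :=
  ⟨fun x y => ⟨x.perm * y.perm, fun i => x.wt i + y.wt (x.perm⁻¹ i)⟩⟩
instance : One (GW m n) := ⟨⟨1, 0⟩⟩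
instance : Inv (GW m n) := ⟨fun x => ⟨x.perm⁻¹, fun i => -x.wt (x.perm i)⟩⟩
@[simp] theorem mul_perm (x y : GW m n) : (x * y).perm = x.perm * y.perm := rfl
@[simp] theorem mul_wt (x y : GW m n) (i : Fin n) :
    (x * y).wt i = x.wt i + y.wt (x.perm⁻¹ i) := rfl
@[simp] theorem one_perm : (1 : GW m n).perm = 1 := rfl
@[simp] theorem one_wt (i : Fin n) : (1 : GW m n).wt i = 0 := rfl
@[simp] theorem inv_perm (x : GW m n) : (x⁻¹).perm = x.perm⁻¹ := rfl
@[simp] theorem inv_wt (x : GW m n) (i : Fin n) : (x⁻¹).wt i = -x.wt (x.perm i) := rfl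
private theorem gw_mul_assoc (a b c : GW m n) : a * b * c = a * (b * c) := by
  ext i
  · simp [mul_assoc]
  · simp [mul_inv_rev, add_assoc]
private theorem gw_one_mul (a : GW m n) : 1 * a = a := by ext i <;> simp
private theorem gw_mul_one (a : GW m n) : a * 1 = a := by ext i <;> simp
private theorem gw_inv_mul_cancel (a : GW m n) : a⁻¹ * a = 1 := by ext i <;> simp
instance : Group (GW m n) where
  mul := (· * ·)
  one := 1
  inv := Inv.inv
  mul_assoc := gw_mul_assoc
  one_mul := gw_one_mul
  mul_one := gw_mul_one
  inv_mul_cancel := gw_inv_mul_cancel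
def cycleOf (w : GW m n) (i : Fin n) : Finset (Fin n) :=
  Finset.univ.filter fun j => w.perm.SameCycle i j
def cycles (w : GW m n) : Finset (Finset (Fin n)) :=
  Finset.univ.image fun i => w.cycleOf i
def cycWt (w : GW m n) (C : Finset (Fin n)) : ZMod m := ∑ i ∈ C, w.wt i
def numCycles (w : GW m n) : ℕ := (cycles w).card
def c0 (w : GW m n) : ℕ := ((cycles w).filter fun C => cycWt w C = 0).card
def codimfix (w : GW m n) : ℕ := n - c0 w
def wtTot (w : GW m n) : ZMod m := ∑ i, w.wt i

/-- The base relation on cycles of `w` induced by `u`: two cycles of `w` are related if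
some cycle of `u` meets both of them. -/
def piRelBase (u w : GW m n) (C₁ C₂ : Finset (Fin n)) : Prop :=
  C₁ ∈ cycles w ∧ C₂ ∈ cycles w ∧ ∃ D ∈ cycles u, (D ∩ C₁).Nonempty ∧ (D ∩ C₂).Nonempty

/-- The equivalence relation on the cycles of `w` generated by `piRelBase`. -/
def piRel (u w : GW m n) : Finset (Fin n) → Finset (Fin n) → Prop :=
  Relation.EqvGen (piRelBase u w)

open Classical in
/-- The part of the partition `Π_u(w)` containing the cycle `C` of `w`. -/
noncomputable def piPart (u w : GW m n) (C : Finset (Fin n)) : Finset (Finset (Fin n)) :=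
  (cycles w).filter fun C' => piRel u w C C'

/-- The set partition `Π_u(w)` of the cycles of `w`, as the set of its parts. -/
noncomputable def piParts (u w : GW m n) : Finset (Finset (Finset (Fin n))) :=
  (cycles w).image fun C => piPart u w C

/-- The weight of a collection `B` of cycles: the sum of the weights of its cycles. -/
def partWt (w : GW m n) (B : Finset (Finset (Fin n))) : ZMod m :=
  ∑ C ∈ B, cycWt w C

open Classical in
/-- The number of parts of `Π_u(w)` of nonzero total weight. -/
noncomputable def piPartsNonzeroWt (u w : GW m n) : ℕ :=
  ((piParts u w).filter fun B => partWt w B ≠ 0).card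

/-- The support of a collection of cycles: the union of the cycles' underlying sets. -/
def supp (B : Finset (Finset (Fin n))) : Finset (Fin n) := B.sup id

/-- Restriction of a permutation to an invariant set `A` (junk value `1` if `A` is
not invariant): it agrees with `σ` on `A` and is the identity off `A`. -/
noncomputable def restrictPerm (σ : Equiv.Perm (Fin n)) (A : Finset (Fin n)) :
    Equiv.Perm (Fin n) :=
  if h : ∀ i, σ i ∈ A ↔ i ∈ A then
    { toFun := fun i => if i ∈ A then σ i else i
      invFun := fun i => if i ∈ A then σ.symm i else i
      left_inv := by
        intro i
        by_cases hi : i ∈ A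
        · simp [hi, (h i).mpr hi]
        · simp [hi]
      right_inv := by
        intro j
        by_cases hj : j ∈ A
        · have hs : σ.symm j ∈ A := by
            have h2 := h (σ.symm j)
            rw [Equiv.apply_symm_apply] at h2
            exact h2.mp hj
          simp [hj, hs]
        · simp [hj] }
  else 1


/-- The restriction `x|_A` of `x` to a subset `A` of `{1,…,n}` (stabilized by `x`):
it agrees with `x` on `A` and acts as the identity, with weight `0`, off `A`. -/
noncomputable def restrict (x : GW m n) (A : Finset (Fin n)) : GW m n :=
  ⟨restrictPerm x.perm A, fun i => if i ∈ A then x.wt i else 0⟩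

/-- The cycles of `x` contained in `A`; for `x = y|_A` this gives the cycles of the
restriction of `y` to `A`, viewed as an element of `G(m,1,#A)`. -/
def cyclesIn (x : GW m n) (A : Finset (Fin n)) : Finset (Finset (Fin n)) :=
  (cycles x).filter fun C => C ⊆ A

/-- The monomial matrix representing `w`: the nonzero entry in column `j` sits in row
`w.perm j` and equals `ζ^(a_(w.perm j))`, where `ζ = exp(2πi/m)`. -/
noncomputable def toMatrix (w : GW m n) : Matrix (Fin n) (Fin n) ℂ :=
  Matrix.of fun i j =>
    if w.perm j = i then Complex.exp (2 * Real.pi * Complex.I * ((w.wt i).val : ℂ) / (m : ℂ))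
    else 0

/-- `S` (a set of cycles of `w`) can be partitioned into singletons whose weight is
`0 (mod p)` and pairs of cycles whose weights sum to `0` in `ℤ/mℤ`; encoded by an
involution pairing up the cycles. -/
def PairedUp (p : ℕ) (hpm : p ∣ m) (w : GW m n) (S : Finset (Finset (Fin n))) : Prop :=
  ∃ π : {C // C ∈ S} → {C // C ∈ S}, Function.Involutive π ∧
    (∀ C, π C = C → ZMod.castHom hpm (ZMod p) (cycWt w C.1) = 0) ∧
    (∀ C, π C ≠ C → cycWt w C.1 + cycWt w (π C).1 = 0)

/-- Membership in `G(m,p,n)`: the total weight is `0 (mod p)`. -/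
def Gmem (p : ℕ) (hpm : p ∣ m) (w : GW m n) : Prop :=
  ZMod.castHom hpm (ZMod p) (wtTot w) = 0

/-- A reflection of `G(m,p,n)`: an element of the group whose fixed space has codimension 1. -/
def IsRefl (p : ℕ) (hpm : p ∣ m) (t : GW m n) : Prop :=
  Gmem p hpm t ∧ codimfix t = 1

/-- The reflection length of `w` with respect to the reflections of `G(m,p,n)`. -/
noncomputable def lR (p : ℕ) (hpm : p ∣ m) (w : GW m n) : ℕ :=
  sInf {k | ∃ l : List (GW m n), (∀ t ∈ l, IsRefl p hpm t) ∧ l.length = k ∧ l.prod = w}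

/-- The order `≤_f` determined by a subadditive function `f`. -/
def leF (f : GW m n → ℕ) (x y : GW m n) : Prop := f x + f (x⁻¹ * y) = f y

/-- The interval `[id, w]_f` inside the poset `(G(m,p,n), ≤_f)`. -/
def interval (p : ℕ) (hpm : p ∣ m) (f : GW m n → ℕ) (w : GW m n) : Set (GW m n) :=
  {u | Gmem p hpm u ∧ leF f u w}

/-- A vector `v ∈ ℂⁿ` is regular for `G(m,p,n)` if it is fixed by no reflection. -/
def IsRegularVec (p : ℕ) (hpm : p ∣ m) (v : Fin n → ℂ) : Prop :=
  ∀ t : GW m n, IsRefl p hpm t → (toMatrix t).mulVec v ≠ v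

/-- An element `w ∈ G(m,p,n)` is regular if it has an eigenvector that is a regular vector. -/
def IsRegularElt (p : ℕ) (hpm : p ∣ m) (w : GW m n) : Prop :=
  ∃ v : Fin n → ℂ, v ≠ 0 ∧ (∃ c : ℂ, (toMatrix w).mulVec v = c • v) ∧ IsRegularVec p hpm v

end GW

lemma AddChar.map_sum_eq_prod {ι A M : Type*} [AddCommMonoid A] [CommMonoid M] (ψ : AddChar A M)
    (s : Finset ι) (f : ι → A) : ψ (∑ i ∈ s, f i) = ∏ i ∈ s, ψ (f i) := by
  induction s using Finset.cons_induction with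
  | empty => simp
  | cons a s ha ih => rw [Finset.sum_cons, Finset.prod_cons, AddChar.map_add_eq_mul, ih]

namespace ZMod
variable {m : ℕ} [NeZero m]

lemma stdAddChar_natCast (k : ℕ) : stdAddChar (k : ZMod m) = stdAddChar (1 : ZMod m) ^ k := by
  rw [← AddChar.map_nsmul_eq_pow, nsmul_one]

lemma stdAddChar_pow_card (a : ZMod m) : stdAddChar a ^ m = 1 := by
  rw [← AddChar.map_nsmul_eq_pow, nsmul_eq_mul, ZMod.natCast_self, zero_mul,
    AddChar.map_zero_eq_one]

lemma stdAddChar_ne_zero (a : ZMod m) : stdAddChar a ≠ 0 := by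
  rw [stdAddChar_apply]
  exact Circle.coe_ne_zero _

lemma isPrimitiveRoot_stdAddChar_one : IsPrimitiveRoot (stdAddChar (1 : ZMod m)) m := by
  have h := Complex.isPrimitiveRoot_exp m (NeZero.ne m)
  rwa [← Int.cast_one, stdAddChar_coe, Int.cast_one, mul_one]

lemma exists_stdAddChar_eq {z : ℂ} (hz : z ^ m = 1) : ∃ a : ZMod m, stdAddChar a = z := by
  obtain ⟨k, -, hk⟩ := isPrimitiveRoot_stdAddChar_one.eq_pow_of_pow_eq_one hz
  exact ⟨k, by rw [stdAddChar_natCast, hk]⟩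

lemma exists_eq_stdAddChar_mul_of_pow_eq_pow {x y : ℂ}
    (h : x ^ m = y ^ m) : ∃ a : ZMod m, x = ZMod.stdAddChar a * y := by
  by_cases hy : y = 0
  · refine ⟨0, ?_⟩
    rw [hy, zero_pow (NeZero.ne m), pow_eq_zero_iff (NeZero.ne m)] at h
    rw [h, hy, mul_zero]
  · obtain ⟨a, ha⟩ := exists_stdAddChar_eq (z := x / y)
      (by rw [div_pow, h, div_self (pow_ne_zero m hy)])
    exact ⟨a, by rw [ha, div_mul_cancel₀ x hy]⟩

end ZMod

section RootsOfUnity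
open Complex ZMod
variable {m : ℕ} [NeZero m]

lemma exists_isPrimitiveRoot_pow {d : ℕ} (hd : 0 < d) :
    ∃ μ : ℂ, IsPrimitiveRoot μ (m * d) ∧ μ ^ d = stdAddChar (1 : ZMod m) := by
  have hmd : m * d ≠ 0 := Nat.mul_ne_zero (NeZero.ne m) hd.ne'
  refine ⟨exp (2 * Real.pi * I / (m * d : ℕ)), isPrimitiveRoot_exp _ hmd, ?_⟩
  rw [← exp_nat_mul, ← Int.cast_one, stdAddChar_coe]
  congr 1
  push_cast
  field_simp [(Nat.cast_ne_zero.mpr hd.ne' : (d : ℂ) ≠ 0)]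

lemma exists_coprime_of_orderOf_pow {c : ℂ} {d : ℕ} (hd : 0 < d) (hc : orderOf (c ^ m) = d) :
    ∃ s : ℕ, s.Coprime d ∧ c ^ d = stdAddChar (s : ZMod m) := by
  obtain ⟨μ, hμ, hμd⟩ := exists_isPrimitiveRoot_pow (m := m) hd
  have : NeZero (m * d) := ⟨Nat.mul_ne_zero (NeZero.ne m) hd.ne'⟩
  have hcmd : c ^ (m * d) = 1 := by rw [pow_mul, ← hc, pow_orderOf_eq_one]
  obtain ⟨s, -, rfl⟩ := hμ.eq_pow_of_pow_eq_one hcmd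
  refine ⟨s, ?_, ?_⟩
  · rw [← (hμ.pow (Nat.pos_of_ne_zero (NeZero.ne _)) rfl).pow_iff_coprime hd, ← pow_mul,
      mul_comm, pow_mul, ← hc]
    exact IsPrimitiveRoot.orderOf _
  · rw [stdAddChar_natCast, ← hμd, ← pow_mul, ← pow_mul, mul_comm]

lemma exists_orderOf_pow_eq {s d : ℕ} (hd : 0 < d) (hs : s.Coprime d) :
    ∃ c : ℂ, orderOf (c ^ m) = d ∧ c ^ d = stdAddChar (s : ZMod m) := by
  obtain ⟨μ, hμ, hμd⟩ := exists_isPrimitiveRoot_pow (m := m) hd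
  refine ⟨μ ^ s, ?_, ?_⟩
  · rw [← pow_mul, mul_comm, pow_mul]
    exact ((hμ.pow (Nat.mul_pos (NeZero.pos m) hd) rfl).pow_of_coprime s hs).eq_orderOf.symm
  · rw [stdAddChar_natCast, ← hμd, ← pow_mul, ← pow_mul, mul_comm]

end RootsOfUnity

namespace GW
variable {m n : ℕ}

section Cycles
variable (w : GW m n)

lemma mem_cycleOf {i j : Fin n} : j ∈ w.cycleOf i ↔ w.perm.SameCycle i j := by
  simp [cycleOf]

lemma mem_cycleOf_self (i : Fin n) : i ∈ w.cycleOf i :=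
  w.mem_cycleOf.2 (Perm.SameCycle.refl _ _)

lemma cycleOf_eq_cycleOf_iff {i j : Fin n} :
    w.cycleOf i = w.cycleOf j ↔ w.perm.SameCycle i j := by
  refine ⟨fun h => w.mem_cycleOf.1 (h ▸ w.mem_cycleOf_self j), fun h => ?_⟩
  ext k
  simp only [mem_cycleOf]
  exact ⟨h.symm.trans, h.trans⟩

lemma cycleOf_eq_of_mem {i j : Fin n} (h : j ∈ w.cycleOf i) : w.cycleOf j = w.cycleOf i :=
  (w.cycleOf_eq_cycleOf_iff.2 (w.mem_cycleOf.1 h)).symm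

lemma cycleOf_perm_apply (i : Fin n) : w.cycleOf (w.perm i) = w.cycleOf i :=
  w.cycleOf_eq_cycleOf_iff.2 (Perm.sameCycle_apply_left.2 (Perm.SameCycle.refl _ _))

lemma cycleOf_mem_cycles (i : Fin n) : w.cycleOf i ∈ w.cycles :=
  mem_image_of_mem _ (mem_univ i)

lemma mem_cycles {C : Finset (Fin n)} : C ∈ w.cycles ↔ ∃ i, w.cycleOf i = C := by
  simp [cycles]

lemma nonempty_of_mem_cycles {C : Finset (Fin n)} (hC : C ∈ w.cycles) : C.Nonempty := by
  obtain ⟨i, rfl⟩ := w.mem_cycles.1 hC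
  exact ⟨i, w.mem_cycleOf_self i⟩

lemma isCycleOn_cycleOf (i : Fin n) : w.perm.IsCycleOn (w.cycleOf i : Set (Fin n)) :=
  ⟨w.perm.bijOn fun j => by simp [mem_cycleOf, Perm.sameCycle_apply_right],
    fun _ hj _ hk => (w.mem_cycleOf.1 hj).symm.trans (w.mem_cycleOf.1 hk)⟩

lemma cycleOf_eq_of_isCycleOn {s : Finset (Fin n)} (hs : w.perm.IsCycleOn (s : Set (Fin n)))
    {i : Fin n} (hi : i ∈ s) : w.cycleOf i = s := by
  ext j
  rw [mem_cycleOf]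
  exact ⟨fun ⟨k, hk⟩ => hk ▸ (hs.1.perm_zpow k).mapsTo hi, fun hj => hs.2 hi hj⟩

lemma cycleOf_eq_singleton {i : Fin n} (h : w.perm i = i) : w.cycleOf i = {i} :=
  w.cycleOf_eq_of_isCycleOn (by simpa using h) (mem_singleton_self i)

lemma sum_cycles_sum {M : Type*} [AddCommMonoid M] (f : Fin n → M) :
    ∑ C ∈ w.cycles, ∑ i ∈ C, f i = ∑ i, f i := by
  refine sum_image' f fun i _ => ?_
  congr 1
  ext j
  simp [w.cycleOf_eq_cycleOf_iff, w.mem_cycleOf, Perm.sameCycle_comm]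

lemma sum_card_cycles : ∑ C ∈ w.cycles, C.card = n := by
  simpa using w.sum_cycles_sum (fun _ => (1 : ℕ))

lemma wtTot_eq_sum_cycWt : wtTot w = ∑ C ∈ w.cycles, cycWt w C :=
  (w.sum_cycles_sum w.wt).symm

lemma card_cycles_le : w.cycles.card ≤ n :=
  (card_image_le).trans (by simp)

lemma sum_cycleOf_eq_sum_range {M : Type*} [AddCommMonoid M] (f : Fin n → M) (b : Fin n) :
    ∑ j ∈ w.cycleOf b, f j = ∑ k ∈ range (w.cycleOf b).card, f ((w.perm ^ k) b) := by
  have hcyc := w.isCycleOn_cycleOf b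
  have hb := w.mem_cycleOf_self b
  symm
  refine sum_nbij (fun k => (w.perm ^ k) b) (fun k _ => ?_) (fun k hk l hl hkl => ?_)
    (fun j hj => ?_) (fun _ _ => rfl)
  · exact (hcyc.1.mapsTo.perm_pow k) hb
  · have := (hcyc.pow_apply_eq_pow_apply hb).1 hkl
    rwa [Nat.ModEq, Nat.mod_eq_of_lt (mem_range.1 hk), Nat.mod_eq_of_lt (mem_range.1 hl)] at this
  · obtain ⟨k, hk, rfl⟩ := hcyc.exists_pow_eq hb hj
    exact ⟨k, mem_range.2 hk, rfl⟩

noncomputable def base (i : Fin n) : Fin n := (w.cycleOf i).min' ⟨i, w.mem_cycleOf_self i⟩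

lemma cycleOf_base (i : Fin n) : w.cycleOf (w.base i) = w.cycleOf i :=
  w.cycleOf_eq_of_mem (min'_mem _ _)

lemma base_eq_base_iff {i j : Fin n} : w.base i = w.base j ↔ w.cycleOf i = w.cycleOf j := by
  refine ⟨fun h => by rw [← w.cycleOf_base i, h, w.cycleOf_base], fun h => ?_⟩
  unfold base
  congr 1

lemma base_perm_apply (i : Fin n) : w.base (w.perm i) = w.base i :=
  w.base_eq_base_iff.2 (w.cycleOf_perm_apply i)

lemma exists_pow_base_eq (i : Fin n) : ∃ k : ℕ, (w.perm ^ k) (w.base i) = i := by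
  obtain ⟨k, -, hk⟩ :=
    (w.isCycleOn_cycleOf i).exists_pow_eq (min'_mem _ _) (w.mem_cycleOf_self i)
  exact ⟨k, hk⟩

end Cycles

lemma eq_one_of_forall {t : GW m n} (h : ∀ i, t.perm i = i ∧ t.wt i = 0) : t = 1 :=
  GW.ext (Equiv.ext fun i => (h i).1) (funext fun i => (h i).2)

lemma c0_of_perm_eq_one {t : GW m n} (h : t.perm = 1) : c0 t = #{i | t.wt i = 0} := by
  have hcyc : t.cycles = univ.map ⟨singleton, singleton_injective⟩ := by
    ext C
    simp [mem_cycles, t.cycleOf_eq_singleton, h, eq_comm]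
  rw [c0, hcyc, filter_map, card_map]
  congr 1
  ext i
  simp [cycWt, Function.comp_def]

lemma codimfix_one : codimfix (1 : GW m n) = 0 := by
  simp [codimfix, c0_of_perm_eq_one (rfl : (1 : GW m n).perm = 1)]

def diagonal (i : Fin n) (a : ZMod m) : GW m n := ⟨1, Pi.single i a⟩

lemma wtTot_diagonal (i : Fin n) (a : ZMod m) : wtTot (diagonal i a) = a := by
  simp [wtTot, diagonal]

lemma codimfix_diagonal (i : Fin n) {a : ZMod m} (ha : a ≠ 0) : codimfix (diagonal i a) = 1 := by
  have hzero : ({k | (diagonal i a).wt k = 0} : Finset (Fin n)) = univ.erase i := by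
    ext k
    rw [mem_filter, mem_erase]
    by_cases hk : k = i
    · subst hk
      simp [diagonal, ha]
    · simp [diagonal, hk]
  rw [codimfix, c0_of_perm_eq_one rfl, hzero, card_erase_of_mem (mem_univ i), card_univ,
    Fintype.card_fin]
  have := i.pos
  omega

def transposition (i j : Fin n) (a : ZMod m) : GW m n :=
  ⟨swap i j, Pi.single i a - Pi.single j a⟩

lemma wtTot_transposition (i j : Fin n) (a : ZMod m) : wtTot (transposition i j a) = 0 := by
  simp [wtTot, transposition, sum_sub_distrib]

lemma codimfix_transposition {i j : Fin n} (hij : i ≠ j) (a : ZMod m) :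
    codimfix (transposition i j a) = 1 := by
  set t := transposition i j a
  have hfix {k : Fin n} (hki : k ≠ i) (hkj : k ≠ j) : t.cycleOf k = {k} :=
    t.cycleOf_eq_singleton (swap_apply_of_ne_of_ne hki hkj)
  have hpair : t.cycleOf i = {i, j} :=
    t.cycleOf_eq_of_isCycleOn (by simpa [t, transposition] using Perm.isCycleOn_swap hij)
      (mem_insert_self i _)
  have hcycles (C : Finset (Fin n)) (hC : C ∈ t.cycles) :
      C = {i, j} ∨ ∃ k, k ≠ i ∧ k ≠ j ∧ C = {k} := by
    obtain ⟨k, rfl⟩ := t.mem_cycles.1 hC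
    by_cases hki : k = i
    · exact Or.inl (hki ▸ hpair)
    by_cases hkj : k = j
    · left
      rw [← hpair, hkj]
      exact t.cycleOf_eq_of_mem (by simp [hpair])
    · exact Or.inr ⟨k, hki, hkj, hfix hki hkj⟩
  have hwt (C : Finset (Fin n)) (hC : C ∈ t.cycles) : cycWt t C = 0 := by
    rcases hcycles C hC with rfl | ⟨k, hki, hkj, rfl⟩
    · simp [cycWt, t, transposition, sum_pair hij, hij, hij.symm]
    · simp [cycWt, t, transposition, hki.symm, hkj.symm]
  have hmem : ({i, j} : Finset (Fin n)) ∈ t.cycles := hpair ▸ t.cycleOf_mem_cycles i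
  have hsum := t.sum_card_cycles
  rw [← add_sum_erase _ _ hmem, card_pair hij, sum_congr rfl fun C hC => ?_, sum_const,
    smul_eq_mul, mul_one, card_erase_of_mem hmem] at hsum
  · rw [codimfix, c0, filter_true_of_mem hwt]
    have := card_pos.2 ⟨_, hmem⟩
    omega
  · rcases hcycles C (mem_of_mem_erase hC) with h | ⟨k, -, -, rfl⟩
    · exact absurd h (ne_of_mem_erase hC)
    · exact card_singleton k

def HasCycleType (w : GW m n) (r N : ℕ) (S : Finset (Finset (Fin n))) : Prop :=
  S.card = Nat.gcd r N ∧
    ∀ C ∈ S, C.card = N / Nat.gcd r N ∧ cycWt w C = ((r / Nat.gcd r N : ℕ) : ZMod m)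

/-- The cycle type of the regular elements of `G(m,m,n)` that have a fixed point. -/
def HasFixedPointCycleType (w : GW m n) (r : ℕ) : Prop :=
  w.cycles.card = Nat.gcd r (n - 1) + 1 ∧
    ∃ C₀ ∈ w.cycles, C₀.card = 1 ∧ cycWt w C₀ = -(r : ZMod m) ∧
      ∀ C ∈ w.cycles, C ≠ C₀ → C.card = (n - 1) / Nat.gcd r (n - 1) ∧
        cycWt w C = ((r / Nat.gcd r (n - 1) : ℕ) : ZMod m)

lemma hasFixedPointCycleType_iff {w : GW m n} {r : ℕ} :
    HasFixedPointCycleType w r ↔ ∃ C₀ ∈ w.cycles, C₀.card = 1 ∧ cycWt w C₀ = -(r : ZMod m) ∧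
      HasCycleType w r (n - 1) (w.cycles.erase C₀) := by
  constructor
  · rintro ⟨hcard, C₀, hC₀, h1, hwt, hrest⟩
    refine ⟨C₀, hC₀, h1, hwt, by rw [card_erase_of_mem hC₀, hcard, Nat.add_sub_cancel], ?_⟩
    exact fun C hC => hrest C (mem_of_mem_erase hC) (ne_of_mem_erase hC)
  · rintro ⟨C₀, hC₀, h1, hwt, hcard, hrest⟩
    rw [card_erase_of_mem hC₀] at hcard
    refine ⟨by have := card_pos.2 ⟨C₀, hC₀⟩; omega, C₀, hC₀, h1, hwt, ?_⟩
    exact fun C hC hne => hrest C (mem_erase.2 ⟨hne, hC⟩)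

variable [NeZero m]

section Matrix
variable (w : GW m n)

lemma toMatrix_mulVec_apply (v : Fin n → ℂ) (i : Fin n) :
    (toMatrix w).mulVec v i = ZMod.stdAddChar (w.wt i) * v (w.perm⁻¹ i) := by
  rw [Matrix.mulVec, dotProduct, sum_eq_single (w.perm⁻¹ i)]
  · simp [toMatrix, ZMod.stdAddChar_apply, ZMod.toCircle_apply]
  · intro j _ hj
    simp [toMatrix, Perm.eq_inv_iff_eq.not.mp hj]
  · simp

lemma toMatrix_mulVec_eq_smul_iff {v : Fin n → ℂ} {c : ℂ} :
    (toMatrix w).mulVec v = c • v ↔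
      ∀ i, ZMod.stdAddChar (w.wt (w.perm i)) * v i = c * v (w.perm i) := by
  rw [funext_iff, ← w.perm.forall_congr_right]
  simp [toMatrix_mulVec_apply]

end Matrix

/-- `c` is the eigenvalue of an eigenvector of `w` supported on `C` whose entries have pairwise
distinct `m`-th powers. -/
def IsRegularEigenvalue (w : GW m n) (c : ℂ) (C : Finset (Fin n)) : Prop :=
  orderOf (c ^ m) = C.card ∧ c ^ C.card = ZMod.stdAddChar (cycWt w C)

lemma IsRegularEigenvalue.ne_zero {w : GW m n} {c : ℂ} {C : Finset (Fin n)}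
    (h : IsRegularEigenvalue w c C) (hC : C.Nonempty) : c ≠ 0 := by
  rintro rfl
  have h1 := pow_orderOf_eq_one ((0 : ℂ) ^ m)
  rw [h.1, zero_pow (NeZero.ne m), zero_pow hC.card_pos.ne'] at h1
  exact zero_ne_one h1

lemma IsRegularEigenvalue.norm_eq_one {w : GW m n} {c : ℂ} {C : Finset (Fin n)}
    (h : IsRegularEigenvalue w c C) (hC : C.Nonempty) : ‖c‖ = 1 := by
  refine Complex.norm_eq_one_of_pow_eq_one (n := m * C.card) ?_
    (Nat.mul_ne_zero (NeZero.ne m) hC.card_pos.ne')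
  rw [pow_mul, ← h.1, pow_orderOf_eq_one]

section Necessity
variable {w : GW m n} {v : Fin n → ℂ} {c : ℂ}

lemma eigen_apply_ne_zero (hv : (toMatrix w).mulVec v = c • v) {i : Fin n} (hi : v i ≠ 0) :
    v (w.perm i) ≠ 0 := by
  intro h0
  have h := (w.toMatrix_mulVec_eq_smul_iff.1 hv) i
  rw [h0, mul_zero] at h
  exact mul_ne_zero (ZMod.stdAddChar_ne_zero _) hi h

lemma eigen_ne_zero_of_mem_cycleOf (hv : (toMatrix w).mulVec v = c • v) {i j : Fin n}
    (hi : v i ≠ 0) (hj : j ∈ w.cycleOf i) : v j ≠ 0 := by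
  obtain ⟨k, -, rfl⟩ := (w.isCycleOn_cycleOf i).exists_pow_eq (w.mem_cycleOf_self i) hj
  clear hj
  induction k with
  | zero => exact hi
  | succ k ih => rw [pow_succ', Perm.mul_apply]; exact eigen_apply_ne_zero hv ih

lemma pow_mul_eigen_pow_apply (hv : (toMatrix w).mulVec v = c • v) (i : Fin n) (k : ℕ) :
    (c ^ m) ^ k * v ((w.perm ^ k) i) ^ m = v i ^ m := by
  induction k with
  | zero => simp
  | succ k ih =>
    have h := congrArg (· ^ m) ((w.toMatrix_mulVec_eq_smul_iff.1 hv) ((w.perm ^ k) i))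
    simp only [mul_pow, ZMod.stdAddChar_pow_card, one_mul] at h
    rw [← ih, h, pow_succ' w.perm, Perm.mul_apply]
    ring

/-- Going once around a cycle multiplies an entry by the product of the weights, so `c^|C|` is
`ζ^(weight of C)`; the `m`-th powers of the entries only see `c^m`, whose order is then `|C|`. -/
theorem isRegularEigenvalue_of_eigen (hv : (toMatrix w).mulVec v = c • v)
    (hinj : Function.Injective fun i => v i ^ m) {i : Fin n} (hi : v i ≠ 0) :
    IsRegularEigenvalue w c (w.cycleOf i) := by
  have hcyc := w.isCycleOn_cycleOf i
  have hpow (k : ℕ) : (c ^ m) ^ k = 1 ↔ (w.perm ^ k) i = i := by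
    have h := pow_mul_eigen_pow_apply hv i k
    refine ⟨fun h1 => hinj ?_, fun h1 => ?_⟩
    · rwa [h1, one_mul] at h
    · rw [h1] at h
      exact mul_left_eq_self₀.1 h |>.resolve_right (pow_ne_zero m hi)
  refine ⟨Nat.dvd_right_iff_eq.1 fun k => ?_, ?_⟩
  · rw [orderOf_dvd_iff_pow_eq_one, hpow, hcyc.pow_apply_eq (w.mem_cycleOf_self i)]
  · have hprod : ∏ j ∈ w.cycleOf i, (ZMod.stdAddChar (w.wt j) * v (w.perm⁻¹ j)) =
        ∏ j ∈ w.cycleOf i, (c * v j) :=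
      prod_congr rfl fun j _ => by rw [← w.toMatrix_mulVec_apply, hv, Pi.smul_apply, smul_eq_mul]
    have hshift : ∏ j ∈ w.cycleOf i, v (w.perm⁻¹ j) = ∏ j ∈ w.cycleOf i, v j :=
      prod_equiv w.perm⁻¹ (fun j => by simp [mem_cycleOf]) (fun _ _ => rfl)
    have hne : ∏ j ∈ w.cycleOf i, v j ≠ 0 :=
      prod_ne_zero_iff.2 fun j hj => eigen_ne_zero_of_mem_cycleOf hv hi hj
    rw [prod_mul_distrib, prod_mul_distrib, hshift, prod_const, ← AddChar.map_sum_eq_prod]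
      at hprod
    exact (mul_right_cancel₀ hne hprod).symm

end Necessity

section Construction
variable (w : GW m n) (c : ℂ)

/-- The solution of the eigenvector recursion along the orbit of `b`, as a function of the
exponent `k` of `uᵏ b`. -/
noncomputable def orbitSeq (b : Fin n) (k : ℕ) : ℂ :=
  c⁻¹ ^ k * ZMod.stdAddChar (∑ l ∈ range k, w.wt ((w.perm ^ (l + 1)) b))

lemma orbitSeq_succ (b : Fin n) (k : ℕ) :
    orbitSeq w c b (k + 1) =
      c⁻¹ * ZMod.stdAddChar (w.wt ((w.perm ^ (k + 1)) b)) * orbitSeq w c b k := by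
  simp only [orbitSeq, sum_range_succ, AddChar.map_add_eq_mul]
  ring

lemma orbitSeq_pow (b : Fin n) (k : ℕ) : orbitSeq w c b k ^ m = ((c ^ m) ^ k)⁻¹ := by
  rw [orbitSeq, mul_pow, ZMod.stdAddChar_pow_card, mul_one, inv_pow, inv_pow, ← pow_mul,
    ← pow_mul, mul_comm]

lemma orbitSeq_periodic {b : Fin n} (h : IsRegularEigenvalue w c (w.cycleOf b)) :
    Function.Periodic (orbitSeq w c b) (w.cycleOf b).card := by
  have hc := h.ne_zero ⟨b, w.mem_cycleOf_self b⟩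
  have hb := (w.isCycleOn_cycleOf b).pow_card_apply (w.mem_cycleOf_self b)
  have hround :
      ∑ l ∈ range (w.cycleOf b).card, w.wt ((w.perm ^ (l + 1)) b) = cycWt w (w.cycleOf b) := by
    rw [cycWt, ← w.cycleOf_perm_apply b, sum_cycleOf_eq_sum_range, w.cycleOf_perm_apply b]
    simp only [pow_succ, Perm.mul_apply]
  intro k
  rw [orbitSeq, orbitSeq, add_comm, sum_range_add, pow_add, AddChar.map_add_eq_mul, hround,
    ← h.2, inv_pow]
  have hshift (l : ℕ) : (w.perm ^ ((w.cycleOf b).card + l + 1)) b = (w.perm ^ (l + 1)) b := by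
    rw [add_assoc, add_comm, pow_add, Perm.mul_apply, hb]
  simp only [hshift]
  field_simp

noncomputable def orbitVec (b : Fin n) : Fin n → ℂ :=
  Function.extend (fun k : ℕ => (w.perm ^ k) b) (orbitSeq w c b) (0 : Fin n → ℂ)

lemma orbitVec_pow_apply {b : Fin n} (h : IsRegularEigenvalue w c (w.cycleOf b)) (k : ℕ) :
    orbitVec w c b ((w.perm ^ k) b) = orbitSeq w c b k := by
  refine Function.FactorsThrough.extend_apply (fun k l hkl => ?_) (0 : Fin n → ℂ) k
  have hmod := ((w.isCycleOn_cycleOf b).pow_apply_eq_pow_apply (w.mem_cycleOf_self b)).1 hkl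
  rw [← (orbitSeq_periodic w c h).map_mod_nat, hmod, (orbitSeq_periodic w c h).map_mod_nat]

/-- The factor `base + 1` gives the entries on different cycles different absolute values. -/
noncomputable def eigenvector (S : Finset (Finset (Fin n))) (i : Fin n) : ℂ :=
  if w.cycleOf i ∈ S then ((w.base i : ℕ) + 1 : ℂ) * orbitVec w c (w.base i) i else 0

variable {w c} {S : Finset (Finset (Fin n))}

lemma eigenvector_apply (hS : ∀ C ∈ S, IsRegularEigenvalue w c C) {i : Fin n}
    (hi : w.cycleOf i ∈ S) {k : ℕ} (hk : (w.perm ^ k) (w.base i) = i) :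
    eigenvector w c S i = ((w.base i : ℕ) + 1 : ℂ) * orbitSeq w c (w.base i) k := by
  rw [eigenvector, if_pos hi]
  congr 1
  calc orbitVec w c (w.base i) i
      = orbitVec w c (w.base i) ((w.perm ^ k) (w.base i)) := by rw [hk]
    _ = _ := orbitVec_pow_apply w c (by rw [w.cycleOf_base]; exact hS _ hi) k

lemma eigenvector_eq_zero_iff (hS : ∀ C ∈ S, IsRegularEigenvalue w c C) (i : Fin n) :
    eigenvector w c S i = 0 ↔ w.cycleOf i ∉ S := by
  refine ⟨fun h hi => ?_, fun hi => if_neg hi⟩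
  have hc := (hS _ hi).ne_zero ⟨i, w.mem_cycleOf_self i⟩
  obtain ⟨k, hk⟩ := w.exists_pow_base_eq i
  rw [eigenvector_apply hS hi hk, orbitSeq] at h
  simp [ZMod.stdAddChar_ne_zero, hc, Nat.cast_add_one_ne_zero] at h

lemma toMatrix_mulVec_eigenvector (hS : ∀ C ∈ S, IsRegularEigenvalue w c C) :
    (toMatrix w).mulVec (eigenvector w c S) = c • eigenvector w c S := by
  refine w.toMatrix_mulVec_eq_smul_iff.2 fun i => ?_
  by_cases hi : w.cycleOf i ∈ S
  · have hc := (hS _ hi).ne_zero ⟨i, w.mem_cycleOf_self i⟩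
    obtain ⟨k, hk⟩ := w.exists_pow_base_eq i
    have hk' : (w.perm ^ (k + 1)) (w.base i) = w.perm i := by rw [pow_succ', Perm.mul_apply, hk]
    rw [eigenvector_apply hS hi hk,
      eigenvector_apply hS (by rwa [w.cycleOf_perm_apply]) (by rwa [w.base_perm_apply]),
      w.base_perm_apply, orbitSeq_succ, hk']
    field_simp
  · have hi' : w.cycleOf (w.perm i) ∉ S := by rwa [w.cycleOf_perm_apply]
    simp [eigenvector, hi, hi']

lemma eigenvector_pow_apply (hS : ∀ C ∈ S, IsRegularEigenvalue w c C) {i : Fin n}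
    (hi : w.cycleOf i ∈ S) {k : ℕ} (hk : (w.perm ^ k) (w.base i) = i) :
    eigenvector w c S i ^ m = ((w.base i : ℕ) + 1 : ℂ) ^ m * ((c ^ m) ^ k)⁻¹ := by
  rw [eigenvector_apply hS hi hk, mul_pow, orbitSeq_pow]

lemma norm_eigenvector_pow (hS : ∀ C ∈ S, IsRegularEigenvalue w c C) {i : Fin n}
    (hi : w.cycleOf i ∈ S) :
    ‖eigenvector w c S i ^ m‖ = ((w.base i : ℕ) + 1 : ℝ) ^ m := by
  obtain ⟨k, hk⟩ := w.exists_pow_base_eq i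
  rw [eigenvector_pow_apply hS hi hk, norm_mul, norm_inv, norm_pow, norm_pow, norm_pow,
    (hS _ hi).norm_eq_one ⟨i, w.mem_cycleOf_self i⟩]
  norm_cast
  simp

/-- On a cycle the `m`-th powers are `(base + 1)^m c^(-mk)`, and `c^m` has order the length of
the cycle. -/
lemma injective_eigenvector_pow (hS : ∀ C ∈ S, IsRegularEigenvalue w c C)
    (hsmall : ∀ i j, w.cycleOf i ∉ S → w.cycleOf j ∉ S → i = j) :
    Function.Injective fun i => eigenvector w c S i ^ m := by
  intro i j hij
  simp only at hij
  by_cases hi : w.cycleOf i ∈ S <;> by_cases hj : w.cycleOf j ∈ S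
  · have hb : w.base i = w.base j := by
      have h := congrArg norm hij
      rw [norm_eigenvector_pow hS hi, norm_eigenvector_pow hS hj] at h
      have h' := Nat.pow_left_injective (NeZero.ne m) (by exact_mod_cast h :
        ((w.base i : ℕ) + 1) ^ m = ((w.base j : ℕ) + 1) ^ m)
      exact Fin.ext (by simpa using h')
    obtain ⟨k, hk⟩ := w.exists_pow_base_eq i
    obtain ⟨l, hl⟩ := w.exists_pow_base_eq j
    rw [eigenvector_pow_apply hS hi hk, eigenvector_pow_apply hS hj hl, hb] at hij
    have hkl : (c ^ m) ^ k = (c ^ m) ^ l :=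
      inv_injective (mul_left_cancel₀ (pow_ne_zero _ (Nat.cast_add_one_ne_zero _)) hij)
    have hreg := hS _ hj
    rw [← w.cycleOf_base] at hreg
    rw [← hk, ← hl, hb]
    refine ((w.isCycleOn_cycleOf _).pow_apply_eq_pow_apply (w.mem_cycleOf_self _)).2 ?_
    rw [← hreg.1, ← IsOfFinOrder.pow_eq_pow_iff_modEq]
    · exact hkl
    · exact orderOf_pos_iff.1 (hreg.1 ▸ card_pos.2 ⟨_, w.mem_cycleOf_self _⟩)
  · rw [(eigenvector_eq_zero_iff hS j).2 hj, zero_pow (NeZero.ne m), pow_eq_zero_iff (NeZero.ne m),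
      eigenvector_eq_zero_iff hS] at hij
    exact absurd hij (not_not.2 hi)
  · rw [(eigenvector_eq_zero_iff hS i).2 hi, zero_pow (NeZero.ne m), eq_comm,
      pow_eq_zero_iff (NeZero.ne m), eigenvector_eq_zero_iff hS] at hij
    exact absurd hij (not_not.2 hj)
  · exact hsmall i j hi hj

end Construction

theorem exists_eigenvector {w : GW m n} {c : ℂ} {S : Finset (Finset (Fin n))}
    (hS : ∀ C ∈ S, IsRegularEigenvalue w c C)
    (hsmall : ∀ i j, w.cycleOf i ∉ S → w.cycleOf j ∉ S → i = j) :
    ∃ v : Fin n → ℂ, (toMatrix w).mulVec v = c • v ∧ (Function.Injective fun i => v i ^ m) ∧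
      ∀ i, v i = 0 ↔ w.cycleOf i ∉ S :=
  ⟨eigenvector w c S, toMatrix_mulVec_eigenvector hS, injective_eigenvector_pow hS hsmall,
    eigenvector_eq_zero_iff hS⟩

lemma diagonal_mulVec_eq_self {i : Fin n} (a : ZMod m) {v : Fin n → ℂ}
    (hv : v i = 0) : (toMatrix (diagonal i a)).mulVec v = v := by
  funext k
  by_cases hk : k = i
  · subst hk
    simp [toMatrix_mulVec_apply, diagonal, hv]
  · simp [toMatrix_mulVec_apply, diagonal, hk, AddChar.map_zero_eq_one]

lemma transposition_mulVec_eq_self {i j : Fin n} (hij : i ≠ j) {a : ZMod m} {v : Fin n → ℂ}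
    (hv : v i = ZMod.stdAddChar a * v j) : (toMatrix (transposition i j a)).mulVec v = v := by
  funext k
  rw [toMatrix_mulVec_apply]
  simp only [transposition, swap_inv, Pi.sub_apply]
  by_cases hki : k = i
  · subst hki
    simp [hij, hv]
  by_cases hkj : k = j
  · subst hkj
    rw [swap_apply_right, hv, Pi.single_eq_of_ne hki, Pi.single_eq_same, zero_sub, ← mul_assoc,
      ← AddChar.map_add_eq_mul, neg_add_cancel, AddChar.map_zero_eq_one, one_mul]
  · simp [swap_apply_of_ne_of_ne hki hkj, hki, hkj, AddChar.map_zero_eq_one]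

/-- Apply the eigenvalue analysis with `c = 1`: the cycle through `i` has length `orderOf 1 = 1`
and weight `0`. -/
lemma fixed_of_mulVec_eq_self {t : GW m n} {v : Fin n → ℂ}
    (hinj : Function.Injective fun i => v i ^ m) (hfix : (toMatrix t).mulVec v = v) {i : Fin n}
    (hi : v i ≠ 0) : t.perm i = i ∧ t.wt i = 0 := by
  obtain ⟨hord, hwt⟩ := isRegularEigenvalue_of_eigen (c := 1) (by rwa [one_smul]) hinj hi
  rw [one_pow, orderOf_one] at hord
  have hki : t.cycleOf i = {i} := eq_singleton_iff_unique_mem.2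
    ⟨t.mem_cycleOf_self i, fun j hj => card_le_one.1 hord.ge j hj i (t.mem_cycleOf_self i)⟩
  have hmem : t.perm i ∈ t.cycleOf i := t.cycleOf_perm_apply i ▸ t.mem_cycleOf_self _
  refine ⟨mem_singleton.1 (hki ▸ hmem), ?_⟩
  rw [hki, card_singleton, pow_one, cycWt, sum_singleton] at hwt
  exact ZMod.injective_stdAddChar (hwt.symm.trans (AddChar.map_zero_eq_one _).symm)

theorem isRegularVec_iff {p : ℕ} (hp : 0 < p) (hpm : p ∣ m) {v : Fin n → ℂ} :
    IsRegularVec p hpm v ↔ (Function.Injective fun i => v i ^ m) ∧ (p < m → ∀ i, v i ≠ 0) := by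
  constructor
  · intro hreg
    refine ⟨fun i j hij => by_contra fun hne => ?_, fun hlt i hi => ?_⟩
    · obtain ⟨a, ha⟩ := ZMod.exists_eq_stdAddChar_mul_of_pow_eq_pow hij
      refine hreg _ ⟨?_, codimfix_transposition hne a⟩ (transposition_mulVec_eq_self hne ha)
      rw [Gmem, wtTot_transposition, map_zero]
    · have hp0 : (p : ZMod m) ≠ 0 := by
        rw [Ne, ZMod.natCast_eq_zero_iff]
        exact fun h => absurd (Nat.le_of_dvd hp h) (not_le.2 hlt)
      refine hreg _ ⟨?_, codimfix_diagonal i hp0⟩ (diagonal_mulVec_eq_self _ hi)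
      rw [Gmem, wtTot_diagonal, map_natCast, ZMod.natCast_self]
  · rintro ⟨hinj, hnz⟩ t ⟨hG, hcod⟩ hfix
    suffices t = 1 by
      rw [this, codimfix_one] at hcod
      exact zero_ne_one hcod
    refine eq_one_of_forall fun i => ?_
    by_cases hi : v i ≠ 0
    · exact fixed_of_mulVec_eq_self hinj hfix hi
    push Not at hi
    have hother (j : Fin n) (hj : j ≠ i) : t.perm j = j ∧ t.wt j = 0 :=
      fixed_of_mulVec_eq_self hinj hfix fun h => hj (hinj (by simp [h, hi]))
    have hpeq : p = m := (Nat.le_of_dvd (NeZero.pos m) hpm).eq_of_not_lt fun h => hnz h i hi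
    subst hpeq
    refine ⟨by_contra fun hne => hne ?_, ?_⟩
    · exact t.perm.injective ((hother _ hne).1)
    · rw [Gmem, ZMod.castHom_self, RingHom.id_apply, wtTot,
        sum_eq_single i (fun j _ hj => (hother j hj).2) (by simp)] at hG
      exact hG

variable {w : GW m n}

lemma exists_isRegularEigenvalue_of_hasCycleType {r N : ℕ} {S : Finset (Finset (Fin n))}
    (h : HasCycleType w r N S) (hr : 1 ≤ r) (hN : 0 < N) :
    ∃ c : ℂ, ∀ C ∈ S, IsRegularEigenvalue w c C := by
  have hg : 0 < Nat.gcd r N := Nat.gcd_pos_of_pos_left N hr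
  obtain ⟨c, hc⟩ := exists_orderOf_pow_eq (m := m)
    (Nat.div_pos (Nat.gcd_le_right r hN) hg) (Nat.coprime_div_gcd_div_gcd hg)
  refine ⟨c, fun C hC => ?_⟩
  rw [IsRegularEigenvalue, (h.2 C hC).1, (h.2 C hC).2]
  exact hc

/-- With `d = orderOf (c^m)` and `c^d = ζ^s`, `s` coprime to `d`, the cycle type is that of
`r = |S| (s + m d)`; adding `m d` to `s` keeps `r ≥ 1` when `s = 0`. -/
lemma exists_hasCycleType_of_isRegularEigenvalue {c : ℂ} {S : Finset (Finset (Fin n))}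
    (hS : ∀ C ∈ S, IsRegularEigenvalue w c C) (hne : ∀ C ∈ S, C.Nonempty)
    (hS0 : S.Nonempty) :
    ∃ r, 1 ≤ r ∧ HasCycleType w r (∑ C ∈ S, C.card) S ∧
      (r : ZMod m) = ∑ C ∈ S, cycWt w C := by
  obtain ⟨C₁, hC₁⟩ := hS0
  obtain ⟨d, hd_eq⟩ : ∃ d, orderOf (c ^ m) = d := ⟨_, rfl⟩
  have hcard (C : Finset (Fin n)) (hC : C ∈ S) : C.card = d := (hS C hC).1.symm.trans hd_eq
  have hd : 0 < d := hcard C₁ hC₁ ▸ (hne C₁ hC₁).card_pos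
  obtain ⟨s, hs, hcs⟩ := exists_coprime_of_orderOf_pow (m := m) hd hd_eq
  have hwt (C : Finset (Fin n)) (hC : C ∈ S) : cycWt w C = s :=
    ZMod.injective_stdAddChar (by rw [← (hS C hC).2, hcard C hC, hcs])
  have hg : 0 < S.card := card_pos.2 ⟨C₁, hC₁⟩
  have hgcd : Nat.gcd (S.card * (s + m * d)) (S.card * d) = S.card := by
    rw [Nat.gcd_mul_left, Nat.gcd_add_mul_right_left, hs, mul_one]
  have hr : 0 < S.card * (s + m * d) :=
    Nat.mul_pos hg (by have := Nat.mul_pos (NeZero.pos m) hd; omega)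
  refine ⟨S.card * (s + m * d), hr, ?_, ?_⟩
  · rw [sum_congr rfl hcard, sum_const, smul_eq_mul, HasCycleType, hgcd,
      Nat.mul_div_cancel_left _ hg, Nat.mul_div_cancel_left _ hg]
    refine ⟨rfl, fun C hC => ⟨hcard C hC, ?_⟩⟩
    rw [hwt C hC]
    push_cast
    rw [ZMod.natCast_self, zero_mul, add_zero]
  · rw [sum_congr rfl hwt, sum_const, nsmul_eq_mul]
    push_cast
    rw [ZMod.natCast_self, zero_mul, add_zero]

variable {v : Fin n → ℂ} {c : ℂ}

lemma hasCycleType_of_eigen (hv : (toMatrix w).mulVec v = c • v)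
    (hinj : Function.Injective fun i => v i ^ m) (hnz : ∀ i, v i ≠ 0) (hn : 0 < n) :
    ∃ r, 1 ≤ r ∧ HasCycleType w r n w.cycles := by
  have hS (C : Finset (Fin n)) (hC : C ∈ w.cycles) : IsRegularEigenvalue w c C := by
    obtain ⟨i, rfl⟩ := w.mem_cycles.1 hC
    exact isRegularEigenvalue_of_eigen hv hinj (hnz i)
  obtain ⟨r, hr, h, -⟩ := exists_hasCycleType_of_isRegularEigenvalue hS
    (fun _ => w.nonempty_of_mem_cycles)
    ⟨_, w.cycleOf_mem_cycles ⟨0, hn⟩⟩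
  rw [w.sum_card_cycles] at h
  exact ⟨r, hr, h⟩

lemma exists_eigen_of_hasCycleType {r : ℕ} (h : HasCycleType w r n w.cycles) (hr : 1 ≤ r)
    (hn : 0 < n) : ∃ (v : Fin n → ℂ) (c : ℂ), (toMatrix w).mulVec v = c • v ∧
      (Function.Injective fun i => v i ^ m) ∧ ∀ i, v i ≠ 0 := by
  obtain ⟨c, hc⟩ := exists_isRegularEigenvalue_of_hasCycleType h hr hn
  obtain ⟨v, hv, hinj, hzero⟩ :=
    exists_eigenvector hc fun i _ hi => absurd (w.cycleOf_mem_cycles i) hi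
  exact ⟨v, c, hv, hinj, fun i => by simpa [hzero] using w.cycleOf_mem_cycles i⟩

lemma hasFixedPointCycleType_of_eigen (hw : wtTot w = 0) (hv : (toMatrix w).mulVec v = c • v)
    (hinj : Function.Injective fun i => v i ^ m) {i₀ i₁ : Fin n} (hi₀ : v i₀ = 0)
    (hi₁ : v i₁ ≠ 0) : ∃ r, 1 ≤ r ∧ HasFixedPointCycleType w r := by
  have hzero (j : Fin n) (hj : v j = 0) : j = i₀ := hinj (by simp [hj, hi₀])
  have hfix : w.perm i₀ = i₀ := by
    refine hzero _ ((mul_eq_zero.1 ?_).resolve_left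
      ((isRegularEigenvalue_of_eigen hv hinj hi₁).ne_zero ⟨i₁, w.mem_cycleOf_self i₁⟩))
    rw [← (w.toMatrix_mulVec_eq_smul_iff.1 hv) i₀, hi₀, mul_zero]
  have hC₀ : w.cycleOf i₀ = {i₀} := w.cycleOf_eq_singleton hfix
  have hcard₀ : (w.cycleOf i₀).card = 1 := by rw [hC₀, card_singleton]
  have hmem : w.cycleOf i₀ ∈ w.cycles := w.cycleOf_mem_cycles i₀
  have hS (C : Finset (Fin n)) (hC : C ∈ w.cycles.erase (w.cycleOf i₀)) :
      IsRegularEigenvalue w c C ∧ C.Nonempty := by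
    refine ⟨?_, w.nonempty_of_mem_cycles (mem_of_mem_erase hC)⟩
    obtain ⟨j, rfl⟩ := w.mem_cycles.1 (mem_of_mem_erase hC)
    exact isRegularEigenvalue_of_eigen hv hinj fun hj => ne_of_mem_erase hC (hzero j hj ▸ rfl)
  have hS0 : w.cycleOf i₁ ∈ w.cycles.erase (w.cycleOf i₀) := by
    refine mem_erase.2 ⟨fun h => hi₁ ?_, w.cycleOf_mem_cycles i₁⟩
    have hi : i₁ ∈ w.cycleOf i₀ := h ▸ w.mem_cycleOf_self i₁
    rw [hC₀, mem_singleton] at hi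
    rw [hi, hi₀]
  obtain ⟨r, hr, htype, hrwt⟩ := exists_hasCycleType_of_isRegularEigenvalue
    (fun C hC => (hS C hC).1) (fun C hC => (hS C hC).2) ⟨_, hS0⟩
  have hN : ∑ C ∈ w.cycles.erase (w.cycleOf i₀), C.card = n - 1 := by
    have h := w.sum_card_cycles
    rw [← add_sum_erase _ _ hmem, hcard₀] at h
    omega
  have hwt : cycWt w (w.cycleOf i₀) = -(r : ZMod m) := by
    rw [wtTot_eq_sum_cycWt, ← add_sum_erase _ _ hmem, ← hrwt] at hw
    exact eq_neg_of_add_eq_zero_left hw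
  exact ⟨r, hr, hasFixedPointCycleType_iff.2
    ⟨_, hmem, hcard₀, hwt, hN ▸ htype⟩⟩

lemma exists_eigen_of_hasFixedPointCycleType {r : ℕ} (h : HasFixedPointCycleType w r)
    (hr : 1 ≤ r) : ∃ (v : Fin n → ℂ) (c : ℂ), v ≠ 0 ∧ (toMatrix w).mulVec v = c • v ∧
      Function.Injective fun i => v i ^ m := by
  have hg := Nat.gcd_pos_of_pos_left (n - 1) hr
  have hN : 0 < n - 1 := by
    have := w.card_cycles_le
    rw [h.1] at this
    omega
  obtain ⟨C₀, hC₀, h1, -, htype⟩ := hasFixedPointCycleType_iff.1 h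
  obtain ⟨c, hc⟩ := exists_isRegularEigenvalue_of_hasCycleType htype hr hN
  have hsmall (i j : Fin n) (hi : w.cycleOf i ∉ w.cycles.erase C₀)
      (hj : w.cycleOf j ∉ w.cycles.erase C₀) : i = j := by
    simp only [mem_erase, w.cycleOf_mem_cycles, and_true, not_not] at hi hj
    exact card_le_one.1 h1.le i (hi ▸ w.mem_cycleOf_self i) j (hj ▸ w.mem_cycleOf_self j)
  obtain ⟨v, hv, hinj, hzero⟩ := exists_eigenvector hc hsmall
  obtain ⟨C, hC⟩ : (w.cycles.erase C₀).Nonempty := card_pos.1 (htype.1 ▸ hg)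
  obtain ⟨i, rfl⟩ := w.mem_cycles.1 (mem_of_mem_erase hC)
  exact ⟨v, c, fun h0 => (hzero i).1 (congrFun h0 i) hC, hv, hinj⟩

theorem isRegularElt_iff_of_lt {p : ℕ} (hp : 0 < p) (hpm : p ∣ m) (hlt : p < m) (hn : 0 < n) :
    IsRegularElt p hpm w ↔ ∃ r, 1 ≤ r ∧ HasCycleType w r n w.cycles := by
  simp only [IsRegularElt, isRegularVec_iff hp hpm, hlt, true_implies]
  constructor
  · rintro ⟨v, -, ⟨c, hv⟩, hinj, hnz⟩
    exact hasCycleType_of_eigen hv hinj hnz hn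
  · rintro ⟨r, hr, h⟩
    obtain ⟨v, c, hv, hinj, hnz⟩ := exists_eigen_of_hasCycleType h hr hn
    exact ⟨v, fun h0 => hnz ⟨0, hn⟩ (congrFun h0 _), ⟨c, hv⟩, hinj, hnz⟩

theorem isRegularElt_self_iff (hn : 0 < n) (hw : Gmem m (dvd_refl m) w) :
    IsRegularElt m (dvd_refl m) w ↔
      ∃ r, 1 ≤ r ∧ (HasCycleType w r n w.cycles ∨ HasFixedPointCycleType w r) := by
  simp only [IsRegularElt, isRegularVec_iff (NeZero.pos m) (dvd_refl m), lt_irrefl,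
    false_implies, and_true]
  constructor
  · rintro ⟨v, hv0, ⟨c, hv⟩, hinj⟩
    by_cases hnz : ∀ i, v i ≠ 0
    · obtain ⟨r, hr, h⟩ := hasCycleType_of_eigen hv hinj hnz hn
      exact ⟨r, hr, Or.inl h⟩
    · push Not at hnz
      obtain ⟨i₀, hi₀⟩ := hnz
      obtain ⟨i₁, hi₁⟩ := Function.ne_iff.1 hv0
      rw [Gmem, ZMod.castHom_self, RingHom.id_apply] at hw
      obtain ⟨r, hr, h⟩ := hasFixedPointCycleType_of_eigen hw hv hinj hi₀ hi₁
      exact ⟨r, hr, Or.inr h⟩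
  · rintro ⟨r, hr, h | h⟩
    · obtain ⟨v, c, hv, hinj, hnz⟩ := exists_eigen_of_hasCycleType h hr hn
      exact ⟨v, fun h0 => hnz ⟨0, hn⟩ (congrFun h0 _), ⟨c, hv⟩, hinj⟩
    · obtain ⟨v, c, hv0, hv, hinj⟩ := exists_eigen_of_hasFixedPointCycleType h hr
      exact ⟨v, hv0, ⟨c, hv⟩, hinj⟩

end GW

/-- Combinatorial characterization of the regular elements of `G(m,p,n)`.
If `p < m`: `w ∈ G(m,p,n)` is regular iff there is an integer `r ≥ 1` such that, with
`g := gcd(r,n)`, `w` has exactly `g` cycles, each of length `n/g` and weight `r/g (mod m)`.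
In `G(m,m,n)`: `w` is regular iff there is `r ≥ 1` such that either (1) as above, or
(2) with `g' := gcd(r, n−1)`, `w` has exactly `g' + 1` cycles, of which one is a
`1`-cycle of weight `−r (mod m)` and the others have length `(n−1)/g'` and weight
`r/g' (mod m)`. -/
theorem stmt15 (m p n : ℕ) (hm : 0 < m) (hp : 0 < p) (hn : 0 < n) (hpm : p ∣ m) :
    (p < m → ∀ w : GW m n, GW.Gmem p hpm w →
      (GW.IsRegularElt p hpm w ↔ ∃ r : ℕ, 1 ≤ r ∧
        (GW.cycles w).card = Nat.gcd r n ∧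
        ∀ C ∈ GW.cycles w, C.card = n / Nat.gcd r n ∧
          GW.cycWt w C = ((r / Nat.gcd r n : ℕ) : ZMod m))) ∧
    (∀ w : GW m n, GW.Gmem m (dvd_refl m) w →
      (GW.IsRegularElt m (dvd_refl m) w ↔ ∃ r : ℕ, 1 ≤ r ∧
        (((GW.cycles w).card = Nat.gcd r n ∧
          ∀ C ∈ GW.cycles w, C.card = n / Nat.gcd r n ∧
            GW.cycWt w C = ((r / Nat.gcd r n : ℕ) : ZMod m)) ∨
         ((GW.cycles w).card = Nat.gcd r (n - 1) + 1 ∧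
          ∃ C₀ ∈ GW.cycles w, C₀.card = 1 ∧ GW.cycWt w C₀ = -(r : ZMod m) ∧
            ∀ C ∈ GW.cycles w, C ≠ C₀ →
              C.card = (n - 1) / Nat.gcd r (n - 1) ∧
              GW.cycWt w C = ((r / Nat.gcd r (n - 1) : ℕ) : ZMod m))))) := by
  have : NeZero m := ⟨hm.ne'⟩
  exact ⟨fun hlt w _ => GW.isRegularElt_iff_of_lt hp hpm hlt hn,
    fun w hw => GW.isRegularElt_self_iff hn hw⟩
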